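/- arXiv:1709.05877 — 2 statements merged into one kernel-verified Lean document; each statement's English description precedes it below -/
import Mathlib

section
/- Let p₁, p₂ be two distinct points on the round 2-sphere S²(ρ) of radius ρ ≤ 1, let D = d(p₁,p₂) be their intrinsic distance, and suppose t₁', t₂' ∈ (D/2, min{3D/2, πρ − D/2}). Then the set S(p₁,p₂; t₁', t₂') = {x ∈ S²(ρ) : d(x,p₁) = t₁' and d(x,p₂) = t₂'} consists of exactly two points. -/
open Real

/-- The intrinsic (geodesic) distance on the round sphere of radius `ρ` in `ℝ³`. -/
noncomputable def gdist (ρ : ℝ) (x y : EuclideanSpace ℝ (Fin 3)) : ℝ :=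
  ρ * Real.arccos ((inner ℝ x y : ℝ) / ρ^2)

/-!
With `φ = D/ρ` the angle between `p₁, p₂` and `θᵢ = tᵢ/ρ`, the hypotheses give
`|θ₁ - θ₂| < φ < θ₁ + θ₂ < 2π - φ`. A point `z` of the set is a vector with `⟪z, z⟫ = ρ²` and
`⟪z, pᵢ⟫ = ρ² cos θᵢ`; the Gram determinant of `z, p₁, p₂` these prescribe is
`ρ⁶ (cos (θ₁ - θ₂) - cos φ) (cos φ - cos (θ₁ + θ₂)) > 0`. In `ℝ³`, `z` is determined by
`⟪z, p₁⟫, ⟪z, p₂⟫, ⟪z, p₁ × p₂⟫`, and by Lagrange's identity `⟪z, p₁ × p₂⟫²` is that Gram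
determinant, so `⟪z, p₁ × p₂⟫ = ±√det`: exactly two points.
-/

open RealInnerProductSpace Matrix Function InnerProductGeometry

local notation "E³" => EuclideanSpace ℝ (Fin 3)

lemma cos_sub_sub_mul_sub_cos_add (x y c : ℝ) :
    (cos (x - y) - c) * (c - cos (x + y)) =
      1 - c ^ 2 - cos x ^ 2 - cos y ^ 2 + 2 * c * cos x * cos y := by
  rw [cos_sub, cos_add]
  linear_combination (sin y ^ 2) * sin_sq_add_cos_sq x + (1 - cos x ^ 2) * sin_sq_add_cos_sq y

lemma cos_lt_cos_of_lt_of_lt_two_pi_sub {φ s : ℝ} (hφ : 0 ≤ φ) (hφs : φ < s)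
    (hs : s < 2 * π - φ) : cos s < cos φ := by
  rcases le_or_gt s π with h | h
  · exact cos_lt_cos_of_nonneg_of_le_pi hφ h hφs
  · rw [← cos_two_pi_sub]
    exact cos_lt_cos_of_nonneg_of_le_pi hφ (by linarith) (by linarith)

lemma spherical_gram_det_pos {φ θ₁ θ₂ : ℝ} (hφ : φ ≤ π) (hsub : |θ₁ - θ₂| < φ)
    (hadd : φ < θ₁ + θ₂) (hadd' : θ₁ + θ₂ < 2 * π - φ) :
    0 < 1 - cos φ ^ 2 - cos θ₁ ^ 2 - cos θ₂ ^ 2 + 2 * cos φ * cos θ₁ * cos θ₂ := by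
  rw [← cos_sub_sub_mul_sub_cos_add]
  have hφ0 : 0 ≤ φ := (abs_nonneg _).trans hsub.le
  refine mul_pos (sub_pos.2 ?_) (sub_pos.2 (cos_lt_cos_of_lt_of_lt_two_pi_sub hφ0 hadd hadd'))
  rw [← cos_abs (θ₁ - θ₂)]
  exact cos_lt_cos_of_nonneg_of_le_pi (abs_nonneg _) hφ hsub

namespace EuclideanSpace

noncomputable def cross (u v : E³) : E³ := WithLp.toLp 2 (u.ofLp ⨯₃ v.ofLp)

lemma inner_cross_sq (z u v : E³) :
    ⟪z, cross u v⟫ ^ 2 =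
      ⟪z, z⟫ * (⟪u, u⟫ * ⟪v, v⟫ - ⟪u, v⟫ ^ 2)
        - (⟪z, u⟫ ^ 2 * ⟪v, v⟫ - 2 * ⟪z, u⟫ * ⟪z, v⟫ * ⟪u, v⟫ + ⟪z, v⟫ ^ 2 * ⟪u, u⟫) := by
  simp only [cross, inner_eq_star_dotProduct, cross_apply, dotProduct, Fin.sum_univ_three,
    star_trivial, Fin.isValue, cons_val_zero, cons_val_one, cons_val]
  ring

variable {u v : E³}

lemma eq_of_inner_eq_of_inner_cross_eq (hG : 0 < ⟪u, u⟫ * ⟪v, v⟫ - ⟪u, v⟫ ^ 2) {z z' : E³}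
    (hu : ⟪z, u⟫ = ⟪z', u⟫) (hv : ⟪z, v⟫ = ⟪z', v⟫) (hn : ⟪z, cross u v⟫ = ⟪z', cross u v⟫) :
    z = z' := by
  have h := inner_cross_sq (z - z') u v
  simp only [inner_sub_left z z' u, inner_sub_left z z' v, inner_sub_left z z' (cross u v), hu, hv,
    hn, sub_self] at h
  have : ⟪z - z', z - z'⟫ * (⟪u, u⟫ * ⟪v, v⟫ - ⟪u, v⟫ ^ 2) = 0 := by linear_combination -h
  exact sub_eq_zero.1 (inner_self_eq_zero.1 ((mul_eq_zero.1 this).resolve_right hG.ne'))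

lemma exists_inner_eq_and_inner_cross_eq (hG : 0 < ⟪u, u⟫ * ⟪v, v⟫ - ⟪u, v⟫ ^ 2) (a b c : ℝ) :
    ∃ z : E³, ⟪z, u⟫ = a ∧ ⟪z, v⟫ = b ∧ ⟪z, cross u v⟫ = c := by
  set L := LinearMap.pi fun i => innerₛₗ ℝ (![u, v, cross u v] i)
  have hL : ∀ z i, L z i = ⟪z, ![u, v, cross u v] i⟫ := fun z i => real_inner_comm z _
  have hinj : Injective L := fun z z' h => by
    simp only [funext_iff, hL, Fin.forall_fin_succ] at h
    exact eq_of_inner_eq_of_inner_cross_eq hG h.1 h.2.1 h.2.2.1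
  obtain ⟨z, hz⟩ : ∃ z, L z = ![a, b, c] :=
    (LinearMap.injective_iff_surjective_of_finrank_eq_finrank (by simp)).1 hinj _
  simp only [funext_iff, hL, Fin.forall_fin_succ] at hz
  exact ⟨z, hz.1, hz.2.1, hz.2.2.1⟩

theorem exists_ne_setOf_inner_eq_pair (hG : 0 < ⟪u, u⟫ * ⟪v, v⟫ - ⟪u, v⟫ ^ 2) {R a b : ℝ}
    (hdet : 0 < R * (⟪u, u⟫ * ⟪v, v⟫ - ⟪u, v⟫ ^ 2)
      - (a ^ 2 * ⟪v, v⟫ - 2 * a * b * ⟪u, v⟫ + b ^ 2 * ⟪u, u⟫)) :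
    ∃ x y : E³, x ≠ y ∧ {z | ⟪z, z⟫ = R ∧ ⟪z, u⟫ = a ∧ ⟪z, v⟫ = b} = {x, y} := by
  set d := R * (⟪u, u⟫ * ⟪v, v⟫ - ⟪u, v⟫ ^ 2)
    - (a ^ 2 * ⟪v, v⟫ - 2 * a * b * ⟪u, v⟫ + b ^ 2 * ⟪u, u⟫)
  have hsphere : ∀ z, ⟪z, u⟫ = a → ⟪z, v⟫ = b → (⟪z, z⟫ = R ↔ ⟪z, cross u v⟫ ^ 2 = d) := by
    intro z hu hv
    rw [inner_cross_sq, hu, hv]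
    refine ⟨fun h => by rw [h], fun h => mul_right_cancel₀ hG.ne' ?_⟩
    linarith
  obtain ⟨x, hxu, hxv, hxn⟩ := exists_inner_eq_and_inner_cross_eq hG a b (√d)
  obtain ⟨y, hyu, hyv, hyn⟩ := exists_inner_eq_and_inner_cross_eq hG a b (-√d)
  refine ⟨x, y, ?_, ?_⟩
  · rintro rfl
    linarith [sqrt_pos.2 hdet]
  ext z
  simp only [Set.mem_ofPred_eq, Set.mem_insert_iff, Set.mem_singleton_iff]
  constructor
  · rintro ⟨hz, hzu, hzv⟩
    rw [hsphere z hzu hzv, ← sq_sqrt hdet.le, sq_eq_sq_iff_eq_or_eq_neg] at hz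
    refine hz.imp (fun hzn => ?_) (fun hzn => ?_)
    · exact eq_of_inner_eq_of_inner_cross_eq hG (hzu.trans hxu.symm) (hzv.trans hxv.symm)
        (hzn.trans hxn.symm)
    · exact eq_of_inner_eq_of_inner_cross_eq hG (hzu.trans hyu.symm) (hzv.trans hyv.symm)
        (hzn.trans hyn.symm)
  · rintro (rfl | rfl)
    · exact ⟨(hsphere z hxu hxv).2 (by rw [hxn, sq_sqrt hdet.le]), hxu, hxv⟩
    · exact ⟨(hsphere z hyu hyv).2 (by rw [hyn, neg_sq, sq_sqrt hdet.le]), hyu, hyv⟩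

end EuclideanSpace

lemma gdist_eq_mul_angle {ρ : ℝ} {x y : E³} (hx : ‖x‖ = ρ) (hy : ‖y‖ = ρ) :
    gdist ρ x y = ρ * angle x y := by
  rw [gdist, angle, hx, hy, sq]

lemma gdist_eq_mul_iff {ρ θ : ℝ} {x y : E³} (hρ : 0 < ρ) (hx : ‖x‖ = ρ) (hy : ‖y‖ = ρ)
    (hθ : θ ∈ Set.Icc 0 π) : gdist ρ x y = ρ * θ ↔ ⟪x, y⟫ = ρ ^ 2 * cos θ := by
  rw [gdist_eq_mul_angle hx hy, mul_right_inj' hρ.ne', ← cos_angle_mul_norm_mul_norm, hx, hy]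
  refine ⟨fun h => by rw [h]; ring, fun h => injOn_cos ⟨angle_nonneg x y, angle_le_pi x y⟩ hθ ?_⟩
  exact mul_left_cancel₀ (pow_ne_zero 2 hρ.ne') (by linear_combination h)

lemma setOf_gdist_eq_setOf_inner {ρ θ₁ θ₂ : ℝ} {p₁ p₂ : E³} (hρ : 0 < ρ) (hp₁ : ‖p₁‖ = ρ)
    (hp₂ : ‖p₂‖ = ρ) (hθ₁ : θ₁ ∈ Set.Icc 0 π) (hθ₂ : θ₂ ∈ Set.Icc 0 π) :
    {z | ‖z‖ = ρ ∧ gdist ρ z p₁ = ρ * θ₁ ∧ gdist ρ z p₂ = ρ * θ₂} =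
      {z | ⟪z, z⟫ = ρ ^ 2 ∧ ⟪z, p₁⟫ = ρ ^ 2 * cos θ₁ ∧ ⟪z, p₂⟫ = ρ ^ 2 * cos θ₂} := by
  ext z
  simp only [Set.mem_ofPred_eq, real_inner_self_eq_norm_sq]
  rw [sq_eq_sq₀ (norm_nonneg z) hρ.le]
  exact and_congr_right fun hz =>
    and_congr (gdist_eq_mul_iff hρ hz hp₁ hθ₁) (gdist_eq_mul_iff hρ hz hp₂ hθ₂)

theorem sphere_circle_intersection_two_points_general (ρ : ℝ)
    (p₁ p₂ : EuclideanSpace ℝ (Fin 3)) (hp₁ : ‖p₁‖ = ρ) (hp₂ : ‖p₂‖ = ρ)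
    (t₁ t₂ : ℝ)
    (ht₁ : t₁ ∈ Set.Ioo (gdist ρ p₁ p₂ / 2)
      (min (3 * gdist ρ p₁ p₂ / 2) (π * ρ - gdist ρ p₁ p₂ / 2)))
    (ht₂ : t₂ ∈ Set.Ioo (gdist ρ p₁ p₂ / 2)
      (min (3 * gdist ρ p₁ p₂ / 2) (π * ρ - gdist ρ p₁ p₂ / 2))) :
    ∃ x y : EuclideanSpace ℝ (Fin 3), x ≠ y ∧
      {z : EuclideanSpace ℝ (Fin 3) | ‖z‖ = ρ ∧ gdist ρ z p₁ = t₁ ∧ gdist ρ z p₂ = t₂}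
        = {x, y} := by
  rw [gdist_eq_mul_angle hp₁ hp₂] at ht₁ ht₂
  set φ := angle p₁ p₂
  have hρ : 0 < ρ := (hp₁ ▸ norm_nonneg p₁).lt_of_ne <| by
    -- for `ρ = 0` the interval in `ht₁` is empty
    rintro rfl
    simp at ht₁
  have hbounds : ∀ θ, ρ * θ ∈ Set.Ioo (ρ * φ / 2) (min (3 * (ρ * φ) / 2) (π * ρ - ρ * φ / 2)) →
      φ / 2 < θ ∧ θ < 3 * φ / 2 ∧ θ < π - φ / 2 := by
    rintro θ ⟨hlo, hhi⟩
    rw [lt_min_iff] at hhi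
    refine ⟨?_, ?_, ?_⟩ <;> nlinarith
  obtain ⟨θ₁, rfl⟩ : ∃ θ, t₁ = ρ * θ := ⟨t₁ / ρ, (mul_div_cancel₀ t₁ hρ.ne').symm⟩
  obtain ⟨θ₂, rfl⟩ : ∃ θ, t₂ = ρ * θ := ⟨t₂ / ρ, (mul_div_cancel₀ t₂ hρ.ne').symm⟩
  obtain ⟨hθ₁lo, hθ₁hi, hθ₁hi'⟩ := hbounds θ₁ ht₁
  obtain ⟨hθ₂lo, hθ₂hi, hθ₂hi'⟩ := hbounds θ₂ ht₂
  have hsin : 0 < sin φ := sin_pos_of_pos_of_lt_pi (by linarith) (by linarith)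
  have hK := spherical_gram_det_pos (θ₁ := θ₁) (θ₂ := θ₂) (angle_le_pi p₁ p₂)
    (abs_sub_lt_iff.2 ⟨by linarith, by linarith⟩) (by linarith) (by linarith)
  have hp₁₂ : ⟪p₁, p₂⟫ = ρ ^ 2 * cos φ := by rw [← cos_angle_mul_norm_mul_norm, hp₁, hp₂]; ring
  have hp₁₁ : ⟪p₁, p₁⟫ = ρ ^ 2 := by rw [real_inner_self_eq_norm_sq, hp₁]
  have hp₂₂ : ⟪p₂, p₂⟫ = ρ ^ 2 := by rw [real_inner_self_eq_norm_sq, hp₂]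
  rw [setOf_gdist_eq_setOf_inner hρ hp₁ hp₂ ⟨by linarith, by linarith⟩ ⟨by linarith, by linarith⟩]
  apply EuclideanSpace.exists_ne_setOf_inner_eq_pair <;> rw [hp₁₁, hp₂₂, hp₁₂]
  · linear_combination mul_pos (pow_pos hρ 4) (pow_pos hsin 2) + ρ ^ 4 * sin_sq_add_cos_sq φ
  · linear_combination mul_pos (pow_pos hρ 6) hK

/-- on the round `2`-sphere of radius `ρ ≤ 1`, for distinct points `p₁,p₂`
at intrinsic distance `D` and radii `t₁', t₂' ∈ (D/2, min (3D/2) (πρ - D/2))`, the set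
`S(p₁,p₂; t₁', t₂')` consists of exactly two points. -/
theorem sphere_circle_intersection_two_points (ρ : ℝ) (hρ0 : 0 < ρ) (hρ : ρ ≤ 1)
    (p₁ p₂ : EuclideanSpace ℝ (Fin 3)) (hp₁ : ‖p₁‖ = ρ) (hp₂ : ‖p₂‖ = ρ)
    (hne : p₁ ≠ p₂) (t₁ t₂ : ℝ)
    (ht₁ : t₁ ∈ Set.Ioo (gdist ρ p₁ p₂ / 2)
      (min (3 * gdist ρ p₁ p₂ / 2) (π * ρ - gdist ρ p₁ p₂ / 2)))
    (ht₂ : t₂ ∈ Set.Ioo (gdist ρ p₁ p₂ / 2)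
      (min (3 * gdist ρ p₁ p₂ / 2) (π * ρ - gdist ρ p₁ p₂ / 2))) :
    ∃ x y : EuclideanSpace ℝ (Fin 3), x ≠ y ∧
      {z : EuclideanSpace ℝ (Fin 3) | ‖z‖ = ρ ∧ gdist ρ z p₁ = t₁ ∧ gdist ρ z p₂ = t₂}
        = {x, y} :=
  sphere_circle_intersection_two_points_general ρ p₁ p₂ hp₁ hp₂ t₁ t₂ ht₁ ht₂
end

section
/- Let X ⊂ ℝ³ be the union of the xy-plane and the nonnegative part of the yz-plane, with the induced intrinsic metric d. Let p = (x₀,y₀,0) be a point of the xy-plane with x₀ ≠ 0, let r > |x₀|, and let p₁ = (x₀ + r·x₀/|x₀|, y₀, 0). Then for any point q on the yz-plane part of the sphere S(p;r) (i.e., q = (0, y, z) with z > 0 and d(q,p) = r), one has d(q, p₁) ≥ sqrt(2r² + 2r|x₀|). -/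
open Real

/-! The point `p₁` lies on the same side of the `y`-axis as `p`, at distance `|x₀| + r` from the axis,
so the unfolding formula gives `d(q, p₁)² = (|x₀| + r + z)² + (y - y₀)² = d(q, p)² + 2r(|x₀| + z) + r²`,
which is `2r² + 2r|x₀| + 2rz ≥ 2r² + 2r|x₀|`. -/

theorem abs_add_mul_div_abs {x r : ℝ} (hx : x ≠ 0) (hr : 0 ≤ r) :
    |(x + r * x / |x|)| = |x| + r := by
  have hxabs : 0 < |x| := abs_pos.mpr hx
  have hfactor : x + r * x / |x| = x * (1 + r / |x|) := by field_simp
  rw [hfactor, abs_mul, abs_of_nonneg (show 0 ≤ 1 + r / |x| by positivity), mul_add, mul_one,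
    mul_div_cancel₀ _ hxabs.ne']

theorem sqrt_two_mul_sq_add_le_of_sq_eq {a r z w : ℝ} (hr : 0 ≤ r) (hz : 0 ≤ z)
    (h : (a + z) ^ 2 + w ^ 2 = r ^ 2) :
    √(2 * r ^ 2 + 2 * r * a) ≤ √((a + r + z) ^ 2 + w ^ 2) :=
  Real.sqrt_le_sqrt (by nlinarith [mul_nonneg hr hz])

theorem dist_to_far_center_ge_general
    (d : ℝ × ℝ × ℝ → ℝ × ℝ × ℝ → ℝ)
    (hsymm : ∀ a b, d a b = d b a)
    (hunfold : ∀ x y₀ y z : ℝ, x ≠ 0 → 0 ≤ z →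
      d (x, y₀, 0) (0, y, z) = Real.sqrt ((|x| + z)^2 + (y - y₀)^2))
    (x₀ y₀ r : ℝ) (hx₀ : x₀ ≠ 0) :
    ∀ y z : ℝ, 0 < z → d (0, y, z) (x₀, y₀, 0) = r →
      Real.sqrt (2*r^2 + 2*r*|x₀|) ≤ d (0, y, z) (x₀ + r*x₀/|x₀|, y₀, 0) := by
  intro y z hz hq
  rw [hsymm] at hq ⊢
  rw [hunfold x₀ y₀ y z hx₀ hz.le] at hq
  have hr : 0 ≤ r := hq ▸ Real.sqrt_nonneg _
  have hp₁ := abs_add_mul_div_abs hx₀ hr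
  have hp₁_ne : x₀ + r * x₀ / |x₀| ≠ 0 :=
    abs_pos.mp (hp₁ ▸ add_pos_of_pos_of_nonneg (abs_pos.mpr hx₀) hr)
  rw [hunfold _ y₀ y z hp₁_ne hz.le, hp₁]
  have hsphere : (|x₀| + z) ^ 2 + (y - y₀) ^ 2 = r ^ 2 := by
    rw [← hq, Real.sq_sqrt (by positivity)]
  exact sqrt_two_mul_sq_add_le_of_sq_eq hr hz.le hsphere

/-- in the union `X ⊂ ℝ³` of the `xy`-plane and the nonnegative part of the
`yz`-plane with the intrinsic metric `d` (given by the unfolding formula below for pairs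
consisting of a point of the `xy`-plane off the `y`-axis and a point of the nonnegative
`yz`-plane), for `p = (x₀,y₀,0)` with `x₀ ≠ 0`, `r > |x₀|`, and
`p₁ = (x₀ + r x₀/|x₀|, y₀, 0)`, every point `q = (0,y,z)` (`z > 0`) of `S(p;r)` satisfies
`d(q,p₁) ≥ sqrt(2r² + 2r|x₀|)`. -/
theorem dist_to_far_center_ge
    (d : ℝ × ℝ × ℝ → ℝ × ℝ × ℝ → ℝ)
    (hsymm : ∀ a b, d a b = d b a)
    (hunfold : ∀ x y₀ y z : ℝ, x ≠ 0 → 0 ≤ z →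
      d (x, y₀, 0) (0, y, z) = Real.sqrt ((|x| + z)^2 + (y - y₀)^2))
    (x₀ y₀ r : ℝ) (hx₀ : x₀ ≠ 0) (hr : |x₀| < r) :
    ∀ y z : ℝ, 0 < z → d (0, y, z) (x₀, y₀, 0) = r →
      Real.sqrt (2*r^2 + 2*r*|x₀|) ≤ d (0, y, z) (x₀ + r*x₀/|x₀|, y₀, 0) :=
  dist_to_far_center_ge_general d hsymm hunfold x₀ y₀ r hx₀
end
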